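/- For every α > 0 and every discrete-time Markov transition kernel g on a metric state space X with stationary distribution π, one has 0.1 · τ_g(α) ≤ t_H(α) ≤ 2 · τ_g(α); moreover τ_g(α) is infinite if and only if t_H(α) is infinite. -/

import Mathlib

open MeasureTheory ENNReal

noncomputable section

namespace MixHit

variable {X : Type*} [MeasurableSpace X]

/-- Total variation distance between two Borel measures. -/
def tv (μ ν : Measure X) : ℝ≥0∞ :=
  ⨆ (A : Set X) (_ : MeasurableSet A), (μ A - ν A) ⊔ (ν A - μ A)

/-- `g` is a Markov transition kernel: each `g x` is a (Borel) probability measure,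
measurably in `x`. -/
def IsMarkov (g : X → Measure X) : Prop :=
  (∀ x, IsProbabilityMeasure (g x)) ∧
    ∀ A : Set X, MeasurableSet A → Measurable fun x => g x A

/-- `t`-step transition probabilities (`iterK g 0 x = δ_x`). -/
def iterK (g : X → Measure X) : ℕ → X → Measure X
  | 0 => fun x => Measure.dirac x
  | n + 1 => fun x => (g x).bind (iterK g n)

/-- `π` is a stationary distribution for `g`. -/
def Stationary (g : X → Measure X) (π : Measure X) : Prop :=
  ∀ A : Set X, MeasurableSet A → ∫⁻ x, g x A ∂π = π A

/-- `g` is reversible with respect to `π`. -/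
def Reversible (g : X → Measure X) (π : Measure X) : Prop :=
  ∀ A B : Set X, MeasurableSet A → MeasurableSet B →
    ∫⁻ x in A, g x B ∂π = ∫⁻ x in B, g x A ∂π

/-- The lazy kernel `g_L(x,·) = (1/2) g(x,·) + (1/2) δ_x`. -/
def lazy (g : X → Measure X) : X → Measure X := fun x =>
  (2 : ℝ≥0∞)⁻¹ • g x + (2 : ℝ≥0∞)⁻¹ • Measure.dirac x

/-- Mixing time `min {t : sup_x ‖g^t(x,·) − π‖ ≤ ε}`, as an element of `ℝ≥0∞`
(`⊤` if there is no such `t`). -/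
def mixTime (g : X → Measure X) (π : Measure X) (ε : ℝ≥0∞) : ℝ≥0∞ :=
  ⨅ (t : ℕ) (_ : ∀ x, tv (iterK g t x) π ≤ ε), (t : ℝ≥0∞)

/-- `d̄(t) = sup_{x,y} ‖g^t(x,·) − g^t(y,·)‖`. -/
def dbar (g : X → Measure X) (t : ℕ) : ℝ≥0∞ :=
  ⨆ (x : X) (y : X), tv (iterK g t x) (iterK g t y)

/-- Standardized mixing time `min {t : d̄(t) ≤ ε}` (`⊤` if there is no such `t`). -/
def stdMix (g : X → Measure X) (ε : ℝ≥0∞) : ℝ≥0∞ :=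
  ⨅ (t : ℕ) (_ : dbar g t ≤ ε), (t : ℝ≥0∞)

/-- `P_x(τ_A = t)` for the chain with kernel `g` started at `x`, where
`τ_A = min {t : X_t ∈ A}` (first-step recursion). -/
def hitEq (g : X → Measure X) (A : Set X) : ℕ → X → ℝ≥0∞
  | 0 => fun x => A.indicator (fun _ => 1) x
  | n + 1 => fun x => Aᶜ.indicator (fun x' => ∫⁻ y, hitEq g A n y ∂(g x')) x

/-- `P_x(τ_A ≤ t)`. -/
def hitLE (g : X → Measure X) (A : Set X) (t : ℕ) (x : X) : ℝ≥0∞ :=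
  ∑ s ∈ Finset.range (t + 1), hitEq g A s x

/-- `E_x[τ_A] = ∑_{t ≥ 0} P_x(τ_A > t)`. -/
def expHit (g : X → Measure X) (A : Set X) (x : X) : ℝ≥0∞ :=
  ∑' t : ℕ, (1 - hitLE g A t x)

/-- Maximum hitting time `t_H(α) = sup {E_x[τ_A] : x ∈ X, A Borel, π(A) ≥ α}`. -/
def maxHit (g : X → Measure X) (π : Measure X) (α : ℝ) : ℝ≥0∞ :=
  ⨆ (x : X) (A : Set X) (_ : MeasurableSet A) (_ : ENNReal.ofReal α ≤ π A),
    expHit g A x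

/-- Large hitting time
`τ_g(α) = min {t : inf {P_x(τ_A ≤ t) : x ∈ X, A Borel, π(A) ≥ α} > 0.9}`. -/
def largeHit (g : X → Measure X) (π : Measure X) (α : ℝ) : ℝ≥0∞ :=
  ⨅ (t : ℕ) (_ : (9 / 10 : ℝ≥0∞) <
      ⨅ (x : X) (A : Set X) (_ : MeasurableSet A) (_ : ENNReal.ofReal α ≤ π A),
        hitLE g A t x),
    (t : ℝ≥0∞)

/-- The strong Feller property: continuity of `x ↦ g(x,·)` in total variation. -/
def StrongFeller [PseudoMetricSpace X] (g : X → Measure X) : Prop :=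
  ∀ x : X, ∀ ε : ℝ, 0 < ε → ∃ δ : ℝ, 0 < δ ∧
    ∀ y : X, dist y x < δ → tv (g x) (g y) < ENNReal.ofReal ε

/-- Law of `X_t` on the event that `t` is the first time the chain lies in `S`. -/
def enterDist (g : X → Measure X) (S : Set X) : ℕ → X → Measure X
  | 0 => fun x => (Measure.dirac x).restrict S
  | n + 1 => fun x => Sᶜ.indicator (fun x' => (g x').bind (enterDist g S n)) x

/-- Law of the chain's position at its first entrance (at a time `≥ 0`) into `S`. -/
def hitMeasure (g : X → Measure X) (S : Set X) (x : X) : Measure X :=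
  Measure.sum fun t => enterDist g S t x

/-- One step of the trace of `g` on `S`: take one `g`-step, then run until the
first entrance into `S`. -/
def traceK (g : X → Measure X) (S : Set X) : X → Measure X :=
  fun x => (g x).bind (hitMeasure g S)

/-- The trace of `g` on `S`, viewed as a kernel on the subtype `S`. -/
def traceSub (g : X → Measure X) (S : Set X) : S → Measure S :=
  fun x => (traceK g S (x : X)).comap (Subtype.val)

/-- Normalization of `π` to `S`, as a measure on the subtype `S`. -/
def normSub (π : Measure X) (S : Set X) : Measure S :=
  (π S)⁻¹ • π.comap (Subtype.val : S → X)

/-- Ergodicity: from every starting point, the chain converges to `π`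
in total variation. -/
def ErgodicK (g : X → Measure X) (π : Measure X) : Prop :=
  Stationary g π ∧
    ∀ x : X, Filter.Tendsto (fun t => tv (iterK g t x) π) Filter.atTop (nhds 0)

/-!
Markov's inequality applied to the tail sum `E_x[τ_A] = ∑ₜ P_x(τ_A > t)` gives
`P_x(τ_A > t) ≤ t_H(α) / (t + 1) < 1/10` for `t = ⌊10 t_H(α)⌋`, so `τ_g(α) ≤ 10 t_H(α)`.
Conversely, if `P_y(τ_A > t) ≤ c ≤ 1/10` for every `y`, the Markov property yields
`P_x(τ_A > a + t + 1) ≤ c P_x(τ_A > a)`, so the tail probabilities decay geometrically along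
blocks of length `t + 1` and `E_x[τ_A] ≤ (t + c) / (1 - c) ≤ 2t`.
-/

section TailSums

lemma mul_le_tsum_of_antitone {f : ℕ → ℝ≥0∞} (hf : Antitone f) (t : ℕ) :
    ((t : ℝ≥0∞) + 1) * f t ≤ ∑' s, f s :=
  calc ((t : ℝ≥0∞) + 1) * f t = ∑ _s ∈ Finset.range (t + 1), f t := by simp [add_mul]
    _ ≤ ∑ s ∈ Finset.range (t + 1), f s :=
        Finset.sum_le_sum fun s hs => hf (Finset.mem_range_succ_iff.mp hs)
    _ ≤ ∑' s, f s := ENNReal.sum_le_tsum _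

lemma le_pow_mul_of_le_mul_shift {f : ℕ → ℝ≥0∞} {c : ℝ≥0∞} {n : ℕ}
    (h : ∀ a, f (a + n) ≤ c * f a) (k j : ℕ) : f (k * n + j) ≤ c ^ k * f j := by
  induction k with
  | zero => simp
  | succ k ih =>
    calc f ((k + 1) * n + j) = f (k * n + j + n) := by ring_nf
      _ ≤ c * f (k * n + j) := h _
      _ ≤ c * (c ^ k * f j) := by gcongr
      _ = c ^ (k + 1) * f j := by ring

lemma tsum_le_of_le_mul_shift {f : ℕ → ℝ≥0∞} {c : ℝ≥0∞} (n : ℕ) [NeZero n]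
    (h : ∀ a, f (a + n) ≤ c * f a) :
    ∑' s, f s ≤ (1 - c)⁻¹ * ∑ j ∈ Finset.range n, f j :=
  calc ∑' s, f s = ∑' p : ℕ × Fin n, f (p.1 * n + p.2) :=
        ((Nat.divModEquiv n).symm.tsum_eq f).symm
    _ = ∑' (k : ℕ) (j : Fin n), f (k * n + j) :=
        ENNReal.tsum_prod (f := fun k (j : Fin n) => f (k * n + j))
    _ ≤ ∑' (k : ℕ) (j : Fin n), c ^ k * f j :=
        ENNReal.tsum_le_tsum fun k => ENNReal.tsum_le_tsum fun j =>
          le_pow_mul_of_le_mul_shift h k j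
    _ = (1 - c)⁻¹ * ∑ j ∈ Finset.range n, f j := by
        simp only [tsum_fintype, ← Finset.mul_sum, ENNReal.tsum_mul_right,
          ENNReal.tsum_geometric, Fin.sum_univ_eq_sum_range]

lemma nine_div_ten_add_one_div_ten : (9 / 10 : ℝ≥0∞) + 1 / 10 = 1 := by
  rw [ENNReal.div_add_div_same]
  norm_num
  exact ENNReal.div_self (by norm_num) (by norm_num)

lemma inv_one_sub_mul_add_le_two_mul {c : ℝ≥0∞} (hc : c ≤ 1 / 10) {t : ℕ} (ht : 1 ≤ t) :
    (1 - c)⁻¹ * (t + c) ≤ 2 * t := by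
  have hc1 : c ≤ 1 := hc.trans (by norm_num)
  have hctop : c ≠ ⊤ := ne_top_of_le_ne_top one_ne_top hc1
  rw [ENNReal.inv_mul_le_iff (tsub_pos_of_lt (hc.trans_lt (by norm_num))).ne' (by finiteness),
    ← ENNReal.toReal_le_toReal (by finiteness) (by finiteness), ENNReal.toReal_add (by simp) hctop,
    ENNReal.toReal_mul, ENNReal.toReal_sub_of_le hc1 one_ne_top, ENNReal.toReal_mul]
  have hcR : c.toReal ≤ 1 / 10 := by simpa using ENNReal.toReal_mono (by finiteness) hc
  have htR : (1 : ℝ) ≤ t := by exact_mod_cast ht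
  simp only [toReal_natCast, toReal_one, toReal_ofNat]
  nlinarith [ENNReal.toReal_nonneg (a := c)]

end TailSums

section HittingProbabilities

variable {g : X → Measure X} {A : Set X}

lemma IsMarkov.measurable (hg : IsMarkov g) : Measurable g :=
  Measure.measurable_of_measurable_coe g hg.2

lemma measurable_hitEq (hg : IsMarkov g) (hA : MeasurableSet A) :
    ∀ n, Measurable (hitEq g A n)
  | 0 => measurable_const.indicator hA
  | n + 1 =>
    ((Measure.measurable_lintegral (measurable_hitEq hg hA n)).comp hg.measurable).indicator
      hA.compl

lemma measurable_hitLE (hg : IsMarkov g) (hA : MeasurableSet A) (t : ℕ) :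
    Measurable (hitLE g A t) :=
  Finset.measurable_sum _ fun s _ => measurable_hitEq hg hA s

lemma hitLE_zero (x : X) : hitLE g A 0 x = A.indicator (fun _ => 1) x := by
  simp [hitLE, hitEq]

lemma hitLE_succ (hg : IsMarkov g) (hA : MeasurableSet A) (n : ℕ) (x : X) :
    hitLE g A (n + 1) x =
      A.indicator (fun _ => 1) x + Aᶜ.indicator (fun x' => ∫⁻ y, hitLE g A n y ∂(g x')) x := by
  rw [hitLE, Finset.sum_range_succ', add_comm]
  by_cases hx : x ∈ A
  · simp [hitEq, hx]
  · simp only [hitEq, Set.indicator_of_mem (Set.mem_compl hx), hitLE,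
      lintegral_finsetSum _ fun s _ => measurable_hitEq hg hA s]

lemma monotone_hitLE (x : X) : Monotone fun t => hitLE g A t x :=
  fun _ _ hst => Finset.sum_le_sum_of_subset (Finset.range_subset_range.2 (by omega))

lemma hitLE_le_one (hg : IsMarkov g) (hA : MeasurableSet A) (n : ℕ) (x : X) :
    hitLE g A n x ≤ 1 := by
  induction n generalizing x with
  | zero => rw [hitLE_zero]; exact Set.indicator_apply_le' (fun _ => le_rfl) fun _ => zero_le_one
  | succ n ih =>
    have := hg.1 x
    rw [hitLE_succ hg hA]
    by_cases hx : x ∈ A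
    · simp [hx]
    · simpa [hx] using (lintegral_mono ih).trans_eq (by simp : ∫⁻ _, (1 : ℝ≥0∞) ∂(g x) = 1)

lemma one_sub_hitLE_succ (hg : IsMarkov g) (hA : MeasurableSet A) (n : ℕ) (x : X) :
    1 - hitLE g A (n + 1) x = Aᶜ.indicator (fun x' => ∫⁻ y, (1 - hitLE g A n y) ∂(g x')) x := by
  rw [hitLE_succ hg hA]
  by_cases hx : x ∈ A
  · simp [hx]
  · have := hg.1 x
    rw [Set.indicator_of_notMem hx, Set.indicator_of_mem (Set.mem_compl hx),
      Set.indicator_of_mem (Set.mem_compl hx), zero_add,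
      lintegral_sub (measurable_hitLE hg hA n) (ne_top_of_le_ne_top one_ne_top
        ((lintegral_mono (hitLE_le_one hg hA n)).trans_eq (by simp)))
        (Filter.Eventually.of_forall (hitLE_le_one hg hA n))]
    simp

lemma one_sub_hitLE_add_le (hg : IsMarkov g) (hA : MeasurableSet A) (t a : ℕ) (x : X) :
    1 - hitLE g A (a + (t + 1)) x ≤ (⨆ y, 1 - hitLE g A t y) * (1 - hitLE g A a x) := by
  induction a generalizing x with
  | zero =>
    have := hg.1 x
    rw [zero_add, one_sub_hitLE_succ hg hA, hitLE_zero]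
    by_cases hx : x ∈ A
    · simp [hx]
    · simpa [hx] using lintegral_mono (μ := g x) (le_iSup fun y => 1 - hitLE g A t y)
  | succ a ih =>
    rw [show a + 1 + (t + 1) = a + (t + 1) + 1 by omega, one_sub_hitLE_succ hg hA,
      one_sub_hitLE_succ hg hA, ← Set.indicator_const_mul]
    refine Set.indicator_le_indicator ?_
    calc ∫⁻ y, (1 - hitLE g A (a + (t + 1)) y) ∂(g x)
        ≤ ∫⁻ y, (⨆ y, 1 - hitLE g A t y) * (1 - hitLE g A a y) ∂(g x) := lintegral_mono ih
      _ = _ := lintegral_const_mul _ (measurable_const.sub (measurable_hitLE hg hA a))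

lemma expHit_le_two_mul (hg : IsMarkov g) (hA : MeasurableSet A) {t : ℕ}
    (ht : ∀ y, 9 / 10 < hitLE g A t y) (x : X) : expHit g A x ≤ 2 * t := by
  rcases Nat.eq_zero_or_pos t with rfl | ht1
  · have hx : x ∈ A := by
      by_contra hx
      simpa [hitLE_zero, hx] using ht x
    have hE : expHit g A x = 0 := ENNReal.tsum_eq_zero.mpr fun s => tsub_eq_zero_of_le <|
      (by simp [hitLE_zero, hx] : 1 ≤ hitLE g A 0 x).trans (monotone_hitLE x s.zero_le)
    simp [hE]
  set c := ⨆ y, 1 - hitLE g A t y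
  have hc : c ≤ 1 / 10 := iSup_le fun y => by
    rw [tsub_le_iff_left]
    exact nine_div_ten_add_one_div_ten.symm.le.trans (add_le_add (ht y).le le_rfl)
  calc expHit g A x ≤ (1 - c)⁻¹ * ∑ j ∈ Finset.range (t + 1), (1 - hitLE g A j x) :=
        tsum_le_of_le_mul_shift (t + 1) fun a => one_sub_hitLE_add_le hg hA t a x
    _ ≤ (1 - c)⁻¹ * (t + c) := by
        rw [Finset.sum_range_succ]
        gcongr
        · exact (Finset.sum_le_sum fun _ _ => tsub_le_self).trans_eq (by simp)
        · exact le_iSup (fun y => 1 - hitLE g A t y) x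
    _ ≤ 2 * t := inv_one_sub_mul_add_le_two_mul hc ht1

lemma one_sub_expHit_div_le_hitLE (t : ℕ) (x : X) :
    1 - expHit g A x / (t + 1) ≤ hitLE g A t x := by
  rw [tsub_le_iff_tsub_le, ENNReal.le_div_iff_mul_le (by simp) (by simp), mul_comm]
  exact mul_le_tsum_of_antitone (fun _ _ hst => tsub_le_tsub_left (monotone_hitLE x hst) 1) t

end HittingProbabilities

section HittingTimes

variable {g : X → Measure X} {π : Measure X} {α : ℝ}

def minHitProb (g : X → Measure X) (π : Measure X) (α : ℝ) (t : ℕ) : ℝ≥0∞ :=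
  ⨅ (x : X) (A : Set X) (_ : MeasurableSet A) (_ : ENNReal.ofReal α ≤ π A), hitLE g A t x

lemma largeHit_eq_iInf_minHitProb :
    largeHit g π α = ⨅ (t : ℕ) (_ : 9 / 10 < minHitProb g π α t), (t : ℝ≥0∞) :=
  rfl

lemma maxHit_le_two_mul_largeHit (hg : IsMarkov g) : maxHit g π α ≤ 2 * largeHit g π α := by
  simp only [largeHit_eq_iInf_minHitProb, ENNReal.mul_iInf_of_ne two_ne_zero ofNat_ne_top]
  refine le_iInf₂ fun t ht => iSup₂_le fun x A => iSup₂_le fun hA hπA =>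
    expHit_le_two_mul hg hA (fun y => ht.trans_le ?_) x
  exact iInf₂_le_of_le y A (iInf₂_le hA hπA)

lemma largeHit_le_ten_mul_maxHit : largeHit g π α ≤ 10 * maxHit g π α := by
  by_cases hM : maxHit g π α = ⊤
  · simp [hM]
  have hExp : ∀ x A, MeasurableSet A → ENNReal.ofReal α ≤ π A → expHit g A x ≤ maxHit g π α :=
    fun x A hA hπA => le_iSup₂_of_le x A (le_iSup₂_of_le hA hπA le_rfl)
  lift maxHit g π α to NNReal using hM with m
  set t := ⌊10 * m⌋₊
  have hmt : (m : ℝ≥0∞) / (t + 1) < 1 / 10 := by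
    rw [ENNReal.div_lt_iff (Or.inl (by positivity)) (Or.inl (by finiteness)), mul_comm,
      ← mul_div_assoc, mul_one, ENNReal.lt_div_iff_mul_lt (by norm_num) (by norm_num), mul_comm]
    exact_mod_cast Nat.lt_floor_add_one (10 * m)
  have hqual : 9 / 10 < minHitProb g π α t :=
    calc 9 / 10 < 1 - (m : ℝ≥0∞) / (t + 1) := lt_tsub_iff_right.mpr <|
          (ENNReal.add_lt_add_left (by finiteness) hmt).trans_eq nine_div_ten_add_one_div_ten
      _ ≤ minHitProb g π α t := le_iInf₂ fun x A => le_iInf₂ fun hA hπA =>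
          (tsub_le_tsub_left (ENNReal.div_le_div_right (hExp x A hA hπA) _) 1).trans
            (one_sub_expHit_div_le_hitLE t x)
  calc largeHit g π α ≤ t := iInf₂_le t hqual
    _ ≤ 10 * m := by exact_mod_cast Nat.floor_le (by positivity)

end HittingTimes

theorem stmt1_general {X : Type*} [MeasurableSpace X]
    (g : X → Measure X) (π : Measure X) (hg : IsMarkov g) (α : ℝ) :
    (1 / 10 : ℝ≥0∞) * largeHit g π α ≤ maxHit g π α ∧
      maxHit g π α ≤ 2 * largeHit g π α ∧
      (largeHit g π α = ⊤ ↔ maxHit g π α = ⊤) := by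
  have hlarge := largeHit_le_ten_mul_maxHit (g := g) (π := π) (α := α)
  have hmax := maxHit_le_two_mul_largeHit (π := π) (α := α) hg
  refine ⟨?_, hmax, fun hL => ?_, fun hM => ?_⟩
  · rw [one_div, ← ENNReal.div_eq_inv_mul]
    exact ENNReal.div_le_of_le_mul' hlarge
  · simpa [hL, ENNReal.mul_eq_top] using hlarge
  · simpa [hM, ENNReal.mul_eq_top] using hmax

/-- equivalence of the maximum hitting time and the large hitting time. -/
theorem stmt1 {X : Type*} [MetricSpace X] [MeasurableSpace X] [BorelSpace X]
    (g : X → Measure X) (π : Measure X) (hg : IsMarkov g)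
    (hπ : IsProbabilityMeasure π) (hstat : Stationary g π) (α : ℝ) (hα : 0 < α) :
    (1 / 10 : ℝ≥0∞) * largeHit g π α ≤ maxHit g π α ∧
      maxHit g π α ≤ 2 * largeHit g π α ∧
      (largeHit g π α = ⊤ ↔ maxHit g π α = ⊤) :=
  stmt1_general g π hg α

end MixHit
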